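/- arXiv:1804.06837 — 2 statements merged into one kernel-verified Lean document; each statement's English description precedes it below -/
import Mathlib

section
/- Let D be a self-adjoint operator on ℋ and let (φ_g)_{g∈Γ} be a finitely supported family of bounded operators on ℋ, each preserving Dom(D) and such that each commutator [D, φ_g] extends to a bounded operator. Define the convolution-type operator Φ on ℓ²(Γ,ℋ) by (Φξ)(g) = Σ_{g₁g₂ = g} φ_{g₁}(ξ(g₂)) (with Γ a group). Then Φ preserves the domain ℓ²(Γ, Dom(D)) of D_⋊ and the commutator [Φ, D_⋊] extends to a bounded operator on ℓ²(Γ,ℋ) with norm at most Σ_{k∈Γ} ‖[D, φ_k]‖. -/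
/-!
Write `τ_k` for the left translation `ξ ↦ ξ (k⁻¹ * ·)` of `ℓ²(Γ, ℋ)`, so that `Φ = ∑_k φ_k τ_k`.
The diagonal operator `D_⋊` commutes with every `τ_k`, hence on its domain
`Φ D_⋊ - D_⋊ Φ = -∑_k [D, φ_k] τ_k`, a finite sum of bounded operators of norms at most
`‖[D, φ_k]‖`, since each `τ_k` is an isometry. Density of `Dom(D)` forces `[D, φ_k] = 0` whenever
`φ_k = 0`, so the family `‖[D, φ_k]‖` is finitely supported as well.
-/

open scoped ENNReal

namespace LinearPMap

theorem map_add_commutator_mem_graph {R E : Type*} [Ring R] [AddCommGroup E] [Module R E]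
    {D : E →ₗ.[R] E} {A C : E → E} (hpres : ∀ x ∈ D.domain, A x ∈ D.domain)
    (hC : ∀ x y z, (x, y) ∈ D.graph → (A x, z) ∈ D.graph → C x = z - A y)
    {x y : E} (hxy : (x, y) ∈ D.graph) : (A x, A y + C x) ∈ D.graph := by
  have hAx := D.mem_graph ⟨A x, hpres x (mem_domain_of_mem_graph hxy)⟩
  rwa [hC x y _ hxy hAx, add_sub_cancel]

theorem commutator_eq_zero_of_eq_zero {R E : Type*} [Ring R] [AddCommGroup E] [Module R E]
    [TopologicalSpace E] [T2Space E] {D : E →ₗ.[R] E} (hD : Dense (D.domain : Set E))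
    {A C : E →L[R] E} (hA : A = 0)
    (hC : ∀ x y z, (x, y) ∈ D.graph → (A x, z) ∈ D.graph → C x = z - A y) : C = 0 := by
  subst hA
  refine DFunLike.coe_injective (C.continuous.ext_on hD (0 : E →L[R] E).continuous
    fun x hx => ?_)
  simpa using hC x _ 0 (D.mem_graph ⟨x, hx⟩) (by simp)

end LinearPMap

section Reindex

variable {α β E : Type*} [NormedAddCommGroup E] {p : ℝ≥0∞}

theorem Memℓp.comp_equiv {f : β → E} (hf : Memℓp f p) (e : α ≃ β) : Memℓp (f ∘ e) p := by
  obtain rfl | rfl | hp := p.trichotomy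
  · rw [memℓp_zero_iff] at hf ⊢
    exact hf.preimage e.injective.injOn
  · rw [memℓp_infty_iff] at hf ⊢
    rwa [Function.comp_def, ← Function.comp_def (fun j => ‖f j‖), e.surjective.range_comp]
  · rw [memℓp_gen_iff hp] at hf ⊢
    exact e.summable_iff.mpr hf

namespace lp

variable [Fact (1 ≤ p)]

theorem norm_comp_equiv (f : lp (fun _ : β => E) p) (e : α ≃ β) :
    ‖(⟨f ∘ e, (lp.memℓp f).comp_equiv e⟩ : lp (fun _ : α => E) p)‖ = ‖f‖ := by
  obtain rfl | hp := p.dichotomy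
  · simp only [norm_eq_ciSup]
    exact e.iSup_comp (g := fun j => ‖f j‖)
  · have hp : 0 < p.toReal := by linarith
    simp only [norm_eq_tsum_rpow hp]
    congr 1
    exact e.tsum_eq (fun j => ‖f j‖ ^ p.toReal)

variable (𝕜 : Type*) [NormedField 𝕜] [NormedSpace 𝕜 E]

noncomputable def compEquiv (e : α ≃ β) : lp (fun _ : β => E) p →ₗᵢ[𝕜] lp (fun _ : α => E) p where
  toFun f := ⟨f ∘ e, (lp.memℓp f).comp_equiv e⟩
  map_add' _ _ := rfl
  map_smul' _ _ := rfl
  norm_map' f := norm_comp_equiv f e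

end lp

end Reindex

namespace lp

variable {Γ 𝕜 E F : Type*} [Group Γ] [NontriviallyNormedField 𝕜]
  [NormedAddCommGroup E] [NormedSpace 𝕜 E] [NormedAddCommGroup F] [NormedSpace 𝕜 F]
  {p : ℝ≥0∞} [Fact (1 ≤ p)]

variable (p) in
noncomputable def convolutionCLM (A : Γ → E →L[𝕜] F) (s : Finset Γ) :
    lp (fun _ : Γ => E) p →L[𝕜] lp (fun _ : Γ => F) p :=
  ∑ k ∈ s, (mapCLM p (fun _ => A k) (norm_nonneg _) fun _ => le_rfl).comp
    (compEquiv 𝕜 (Equiv.mulLeft k⁻¹)).toContinuousLinearMap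

theorem convolutionCLM_apply (A : Γ → E →L[𝕜] F) (s : Finset Γ) (ξ : lp (fun _ : Γ => E) p)
    (g : Γ) : convolutionCLM p A s ξ g = ∑ k ∈ s, A k (ξ (k⁻¹ * g)) := by
  rw [convolutionCLM, FunLike.coe_sum, Finset.sum_apply, lp.coeFn_sum, Finset.sum_apply]
  rfl

theorem norm_convolutionCLM_le (A : Γ → E →L[𝕜] F) (s : Finset Γ) :
    ‖convolutionCLM p A s‖ ≤ ∑ k ∈ s, ‖A k‖ := by
  refine (norm_sum_le _ _).trans (Finset.sum_le_sum fun k _ => ?_)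
  refine (ContinuousLinearMap.opNorm_comp_le _ _).trans ?_
  exact (mul_le_mul (norm_mapCLM_le _ _ _ _) (LinearIsometry.norm_toContinuousLinearMap_le _)
    (norm_nonneg _) (norm_nonneg _)).trans_eq (mul_one _)

theorem convolutionCLM_mem_graph {D : E →ₗ.[𝕜] E} {A C : Γ → E →L[𝕜] E}
    (hpres : ∀ k, ∀ x ∈ D.domain, A k x ∈ D.domain)
    (hC : ∀ k x y z, (x, y) ∈ D.graph → (A k x, z) ∈ D.graph → C k x = z - A k y)
    (s : Finset Γ) {ξ η : lp (fun _ : Γ => E) p} (hξη : ∀ g, (ξ g, η g) ∈ D.graph) (g : Γ) :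
    (convolutionCLM p A s ξ g, (convolutionCLM p A s η + convolutionCLM p C s ξ) g) ∈ D.graph := by
  rw [coeFn_add, Pi.add_apply, convolutionCLM_apply, convolutionCLM_apply, convolutionCLM_apply,
    ← Finset.sum_add_distrib, prod_mk_sum]
  exact D.graph.sum_mem fun k _ =>
    LinearPMap.map_add_commutator_mem_graph (hpres k) (hC k) (hξη (k⁻¹ * g))

end lp

theorem commutator_with_crossed_operator_bounded_general
    {Γ : Type*} [Group Γ]
    {H : Type*} [NormedAddCommGroup H] [InnerProductSpace ℂ H] [CompleteSpace H]
    (D : H →ₗ.[ℂ] H) (hsa : IsSelfAdjoint D)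
    (φ : Γ → (H →L[ℂ] H)) (hsupp : (Function.support φ).Finite)
    (hpres : ∀ (g : Γ), ∀ x ∈ D.domain, φ g x ∈ D.domain)
    (C : Γ → (H →L[ℂ] H))
    (hC : ∀ (g : Γ) (x y z : H), (x, y) ∈ D.graph → (φ g x, z) ∈ D.graph →
      C g x = z - φ g y)
    (Φ : lp (fun _ : Γ => H) 2 →L[ℂ] lp (fun _ : Γ => H) 2)
    (hΦ : ∀ (ξ : lp (fun _ : Γ => H) 2) (g : Γ),
      (Φ ξ : ∀ _ : Γ, H) g = ∑ᶠ g₁ : Γ, φ g₁ ((ξ : ∀ _ : Γ, H) (g₁⁻¹ * g)))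
    (Dc : lp (fun _ : Γ => H) 2 →ₗ.[ℂ] lp (fun _ : Γ => H) 2)
    (hgraph : ∀ ξ η : lp (fun _ : Γ => H) 2,
      (ξ, η) ∈ Dc.graph ↔
        ∀ g : Γ, ((ξ : ∀ _ : Γ, H) g, (η : ∀ _ : Γ, H) g) ∈ D.graph) :
    (∀ ξ ∈ Dc.domain, Φ ξ ∈ Dc.domain) ∧
    ∃ K : lp (fun _ : Γ => H) 2 →L[ℂ] lp (fun _ : Γ => H) 2,
      ‖K‖ ≤ (∑ᶠ k : Γ, ‖C k‖) ∧
      ∀ ξ η η' : lp (fun _ : Γ => H) 2,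
        (ξ, η) ∈ Dc.graph → (Φ ξ, η') ∈ Dc.graph → K ξ = Φ η - η' := by
  set s := hsupp.toFinset
  have hΦ_eq : Φ = lp.convolutionCLM 2 φ s := by
    ext ξ g
    rw [hΦ, lp.convolutionCLM_apply]
    exact finsum_eq_sum_of_support_subset _ fun k hk =>
      hsupp.mem_toFinset.mpr fun hφ => hk (by simp [hφ])
  -- `∑ᶠ` is `0` on an infinite support, so the bound needs `support C` to be finite.
  have hC_supp : Function.support C ⊆ s := fun k hk =>
    hsupp.mem_toFinset.mpr fun hφ =>
      hk (LinearPMap.commutator_eq_zero_of_eq_zero hsa.dense_domain hφ (hC k))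
  set T := lp.convolutionCLM 2 C s
  have hΦ_graph : ∀ ξ η, (ξ, η) ∈ Dc.graph → (Φ ξ, Φ η + T ξ) ∈ Dc.graph := fun ξ η h =>
    (hgraph _ _).mpr (hΦ_eq ▸ lp.convolutionCLM_mem_graph hpres hC s ((hgraph ξ η).mp h))
  refine ⟨fun ξ hξ => LinearPMap.mem_domain_of_mem_graph (hΦ_graph ξ _ (Dc.mem_graph ⟨ξ, hξ⟩)),
    -T, ?_, fun ξ η η' hξη hη' => ?_⟩
  · rw [norm_neg, finsum_eq_sum_of_support_subset _ fun k hk => hC_supp (norm_ne_zero_iff.mp hk)]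
    exact lp.norm_convolutionCLM_le C s
  · rw [Dc.mem_graph_snd_inj hη' (hΦ_graph ξ η hξη) rfl]
    simp

/-- Let `D` be a self-adjoint operator on `ℋ` and `(φ_g)_{g∈Γ}` a finitely
supported family of bounded operators, each preserving `Dom(D)` and with each commutator
`[D, φ_g]` extending to a bounded operator `C_g`.  The convolution operator `Φ` on
`ℓ²(Γ, ℋ)`, `(Φξ)(g) = Σ_{g₁g₂=g} φ_{g₁}(ξ(g₂))`, preserves the domain of the diagonal
operator `D_⋊` and the commutator `[Φ, D_⋊]` extends to a bounded operator `K` on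
`ℓ²(Γ, ℋ)` with `‖K‖ ≤ Σ_k ‖[D, φ_k]‖`. -/
theorem commutator_with_crossed_operator_bounded
    {Γ : Type*} [Group Γ] [Countable Γ]
    {H : Type*} [NormedAddCommGroup H] [InnerProductSpace ℂ H] [CompleteSpace H]
    (D : H →ₗ.[ℂ] H) (hsa : IsSelfAdjoint D)
    (φ : Γ → (H →L[ℂ] H)) (hsupp : (Function.support φ).Finite)
    (hpres : ∀ (g : Γ), ∀ x ∈ D.domain, φ g x ∈ D.domain)
    (C : Γ → (H →L[ℂ] H))
    (hC : ∀ (g : Γ) (x y z : H), (x, y) ∈ D.graph → (φ g x, z) ∈ D.graph →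
      C g x = z - φ g y)
    (Φ : lp (fun _ : Γ => H) 2 →L[ℂ] lp (fun _ : Γ => H) 2)
    (hΦ : ∀ (ξ : lp (fun _ : Γ => H) 2) (g : Γ),
      (Φ ξ : ∀ _ : Γ, H) g = ∑ᶠ g₁ : Γ, φ g₁ ((ξ : ∀ _ : Γ, H) (g₁⁻¹ * g)))
    (Dc : lp (fun _ : Γ => H) 2 →ₗ.[ℂ] lp (fun _ : Γ => H) 2)
    (hgraph : ∀ ξ η : lp (fun _ : Γ => H) 2,
      (ξ, η) ∈ Dc.graph ↔
        ∀ g : Γ, ((ξ : ∀ _ : Γ, H) g, (η : ∀ _ : Γ, H) g) ∈ D.graph) :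
    (∀ ξ ∈ Dc.domain, Φ ξ ∈ Dc.domain) ∧
    ∃ K : lp (fun _ : Γ => H) 2 →L[ℂ] lp (fun _ : Γ => H) 2,
      ‖K‖ ≤ (∑ᶠ k : Γ, ‖C k‖) ∧
      ∀ ξ η η' : lp (fun _ : Γ => H) 2,
        (ξ, η) ∈ Dc.graph → (Φ ξ, η') ∈ Dc.graph → K ξ = Φ η - η' :=
  commutator_with_crossed_operator_bounded_general D hsa φ hsupp hpres C hC Φ hΦ Dc hgraph
end

section
/- With λ, λ̂ as above, the map Λ(T) := λ ∘ T ∘ λ̂ is an injective *-homomorphism from the von Neumann algebra ℳ of Γ-invariant bounded operators on L²(M̂) onto the corner (λλ̂)𝒩(λλ̂) of the crossed product von Neumann algebra 𝒩, i.e. Λ preserves products and adjoints, is injective, and its image is the compression of 𝒩 by the projection λλ̂. -/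
/-!
Since `∑ g, ρ (a g m) ^ 2 = 1` and the action preserves `μ`, `λ` is an isometry, so `λ̂ λ = 1`;
this gives multiplicativity and injectivity of `Λ`, and `Λ(T)* = Λ(T*)` is formal. The map `λ`
intertwines the action `U` with the right translations `R` of `ℓ²(Γ, L²(M̂))`, so `Λ` maps `ℳ`
into the commutant of the `R g`, and `T ↦ λ̂ T λ` maps that commutant back into `ℳ`. It remains to
see that `𝒩` is exactly the commutant of the right translations. One inclusion is minimality of
`𝒩`. Conversely, an operator `W` commuting with `𝒩` commutes with `1 ⊗ B(L²(M̂))`, so it has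
scalar matrix entries, and with the twisted left translations `V k`, so these entries are
`c (h⁻¹ * g)`: on finitely supported vectors `W = ∑ k, c k • R k⁻¹`, which commutes with everything
commuting with the `R g`. Hence the commutant of the `R g` lies in `𝒩'' = 𝒩`.
-/

open MeasureTheory ContinuousLinearMap
open scoped ENNReal lp

lemma lp.enorm_rpow_two_eq_tsum {α : Type*} {E : α → Type*} [∀ i, NormedAddCommGroup (E i)]
    (x : lp E 2) : ‖x‖ₑ ^ (2 : ℝ) = ∑' i, ‖x i‖ₑ ^ (2 : ℝ) := by
  have h2 : (2 : ℝ≥0∞).toReal = 2 := by norm_num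
  have hsum := (lp.memℓp x).summable (by norm_num : 0 < (2 : ℝ≥0∞).toReal)
  rw [h2] at hsum
  simp only [← ofReal_norm, ENNReal.ofReal_rpow_of_nonneg (norm_nonneg _) zero_le_two]
  rw [← ENNReal.ofReal_tsum_of_nonneg (fun i => by positivity) hsum, ← h2,
    lp.norm_rpow_eq_tsum (by norm_num)]

lemma MeasureTheory.Lp.enorm_rpow_two_eq_lintegral {M E : Type*} [MeasurableSpace M]
    {μ : Measure M} [NormedAddCommGroup E] (f : Lp E 2 μ) :
    ‖f‖ₑ ^ (2 : ℝ) = ∫⁻ m, ‖f m‖ₑ ^ (2 : ℝ) ∂μ := by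
  rw [Lp.enorm_def]
  exact eLpNorm_nnreal_pow_eq_lintegral (p := 2) two_ne_zero

lemma exists_eq_smul_of_forall_commute {𝕜 E : Type*} [RCLike 𝕜] [NormedAddCommGroup E]
    [InnerProductSpace 𝕜 E] (A : E → E) (hA : ∀ (S : E →L[𝕜] E) (ζ : E), A (S ζ) = S (A ζ)) :
    ∃ c : 𝕜, ∀ ζ, A ζ = c • ζ := by
  by_cases hE : ∀ ζ : E, ζ = 0
  · exact ⟨0, fun ζ => by rw [hE (A ζ), hE ζ, smul_zero]⟩
  push Not at hE
  obtain ⟨ξ, hξ⟩ := hE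
  have hξ0 : (inner 𝕜 ξ ξ : 𝕜) ≠ 0 := inner_self_ne_zero.mpr hξ
  refine ⟨inner 𝕜 ξ (A ξ) / inner 𝕜 ξ ξ, fun ζ => ?_⟩
  -- `A` commutes with the rank-one operator `x ↦ ⟪ξ, x⟫ / ⟪ξ, ξ⟫ • ζ`, which sends `ξ` to `ζ`
  have h := hA (((inner 𝕜 ξ ξ)⁻¹ • innerSL 𝕜 ξ).smulRight ζ) ξ
  simp only [smulRight_apply, smul_apply, innerSL_apply_apply, smul_eq_mul,
    inv_mul_cancel₀ hξ0, one_smul] at h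
  rw [h, div_eq_inv_mul, mul_comm, mul_smul, smul_smul, mul_comm]

namespace CrossedProduct

variable {Γ : Type*} [Group Γ]

section RightTranslation

variable {𝕜 : Type*} [NormedField 𝕜] {E : Type*} [NormedAddCommGroup E] [NormedSpace 𝕜 E]

lemma memℓp_comp_mulRight (g : Γ) (x : ℓ²(Γ, E)) : Memℓp (fun h => x (h * g)) 2 := by
  have hx := lp.memℓp x
  rw [memℓp_gen_iff (by norm_num)] at hx ⊢
  exact (Equiv.mulRight g).summable_iff.mpr hx

variable (𝕜 E) in
def rightTranslation (g : Γ) : ℓ²(Γ, E) ≃ₗᵢ[𝕜] ℓ²(Γ, E) where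
  toFun x := ⟨fun h => x (h * g), memℓp_comp_mulRight g x⟩
  invFun x := ⟨fun h => x (h * g⁻¹), memℓp_comp_mulRight g⁻¹ x⟩
  left_inv x := by ext h; simp
  right_inv x := by ext h; simp
  map_add' x y := rfl
  map_smul' c x := rfl
  norm_map' x := by
    simp only [LinearEquiv.coe_mk, lp.norm_eq_tsum_rpow (by norm_num : 0 < (2 : ℝ≥0∞).toReal)]
    exact congrArg (· ^ _) ((Equiv.mulRight g).tsum_eq fun h => ‖x h‖ ^ (2 : ℝ≥0∞).toReal)

@[simp]
lemma rightTranslation_apply (g : Γ) (x : ℓ²(Γ, E)) (h : Γ) :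
    rightTranslation 𝕜 E g x h = x (h * g) := rfl

@[simp]
lemma rightTranslation_symm (g : Γ) :
    (rightTranslation 𝕜 E g).symm = rightTranslation 𝕜 E g⁻¹ := by
  ext x : 1
  rw [LinearIsometryEquiv.symm_apply_eq]
  ext h
  simp

lemma rightTranslation_single [DecidableEq Γ] (g h : Γ) (ζ : E) :
    rightTranslation 𝕜 E g (lp.single 2 h ζ) = lp.single 2 (h * g⁻¹) ζ := by
  ext k
  simp only [rightTranslation_apply, lp.single_apply, Pi.single_apply, eq_mul_inv_iff_mul_eq]

end RightTranslation

section Commutant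

variable {H : Type*} [NormedAddCommGroup H] [InnerProductSpace ℂ H]

variable (Γ H) in
noncomputable def rightTranslationCommutant [CompleteSpace H] : VonNeumannAlgebra ℓ²(Γ, H) where
  toStarSubalgebra := StarSubalgebra.centralizer ℂ
    (Set.range fun g : Γ => (rightTranslation ℂ H g : ℓ²(Γ, H) →L[ℂ] ℓ²(Γ, H)))
  centralizer_centralizer' := Set.centralizer_centralizer_centralizer _

lemma mem_rightTranslationCommutant_iff [CompleteSpace H] {X : ℓ²(Γ, H) →L[ℂ] ℓ²(Γ, H)} :
    X ∈ rightTranslationCommutant Γ H ↔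
      ∀ g x, rightTranslation ℂ H g (X x) = X (rightTranslation ℂ H g x) := by
  have hcomm : ∀ g, (rightTranslation ℂ H g : ℓ²(Γ, H) →L[ℂ] ℓ²(Γ, H)) * X =
      X * (rightTranslation ℂ H g : ℓ²(Γ, H) →L[ℂ] ℓ²(Γ, H)) ↔
      ∀ x, rightTranslation ℂ H g (X x) = X (rightTranslation ℂ H g x) :=
    fun g => ContinuousLinearMap.ext_iff
  change X ∈ StarSubalgebra.centralizer ℂ _ ↔ _
  simp only [StarSubalgebra.mem_centralizer_iff, Set.forall_mem_range,
    LinearIsometryEquiv.star_eq_symm, rightTranslation_symm, hcomm]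
  exact ⟨fun h g => (h g).1, fun h g => ⟨h g, h g⁻¹⟩⟩

lemma diagonal_single {α : Type*} [DecidableEq α] {ι : (H →L[ℂ] H) → ℓ²(α, H) →L[ℂ] ℓ²(α, H)}
    (hι : ∀ S x g, ι S x g = S (x g)) (S : H →L[ℂ] H) (h : α) (ζ : H) :
    ι S (lp.single 2 h ζ) = lp.single 2 h (S ζ) := by
  ext g
  rw [hι, lp.single_apply, lp.single_apply]
  exact Pi.apply_single (fun _ => S) (fun _ => map_zero S) h ζ g

variable [DecidableEq Γ] {U : Γ → H ≃ₗᵢ[ℂ] H} {ι : (H →L[ℂ] H) → ℓ²(Γ, H) →L[ℂ] ℓ²(Γ, H)}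
  {V : Γ → ℓ²(Γ, H) →L[ℂ] ℓ²(Γ, H)}

lemma twistedTranslation_single (hV : ∀ k x g, V k x g = U k (x (k⁻¹ * g))) (k h : Γ) (ζ : H) :
    V k (lp.single 2 h ζ) = lp.single 2 (k * h) (U k ζ) := by
  ext g
  rw [hV]
  rcases eq_or_ne g (k * h) with rfl | hne
  · simp only [inv_mul_cancel_left, lp.single_apply_self]
  · have hne' : k⁻¹ * g ≠ h := fun hc => hne (by rw [← hc, mul_inv_cancel_left])
    simp only [lp.single_apply_ne _ _ _ hne, lp.single_apply_ne _ _ _ hne', map_zero]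

lemma exists_convolution_of_commute (hι : ∀ S x g, ι S x g = S (x g))
    (hV : ∀ k x g, V k x g = U k (x (k⁻¹ * g))) {W : ℓ²(Γ, H) →L[ℂ] ℓ²(Γ, H)}
    (hWι : ∀ S, ι S * W = W * ι S) (hWV : ∀ k, V k * W = W * V k) :
    ∃ c : Γ → ℂ, ∀ h ζ g, W (lp.single 2 h ζ) g = c (h⁻¹ * g) • ζ := by
  have hscalar : ∀ g : Γ, ∃ c : ℂ, ∀ ζ, W (lp.single 2 1 ζ) g = c • ζ := fun g =>
    exists_eq_smul_of_forall_commute _ fun S ζ => by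
      rw [← hι, ← diagonal_single hι, ← mul_apply_eq_comp, ← hWι, mul_apply_eq_comp]
  choose c hc using hscalar
  refine ⟨c, fun h ζ g => ?_⟩
  obtain ⟨ξ, rfl⟩ := (U h).surjective ζ
  calc W (lp.single 2 h (U h ξ)) g = V h (W (lp.single 2 1 ξ)) g := by
        rw [← mul_apply_eq_comp, hWV, mul_apply_eq_comp, twistedTranslation_single hV, mul_one]
    _ = c (h⁻¹ * g) • U h ξ := by rw [hV, hc, map_smul]

lemma hasSum_apply_of_convolution {W : ℓ²(Γ, H) →L[ℂ] ℓ²(Γ, H)} {c : Γ → ℂ}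
    (hc : ∀ h ζ g, W (lp.single 2 h ζ) g = c (h⁻¹ * g) • ζ) (x : ℓ²(Γ, H)) (g : Γ) :
    HasSum (fun k => c k • x (g * k⁻¹)) (W x g) := by
  have hx : HasSum (fun h => W (lp.single 2 h (x h)) g) (W x g) :=
    ((lp.hasSum_single ENNReal.ofNat_ne_top x).mapL W).mapL (lp.evalCLM ℂ _ 2 g)
  simp only [hc] at hx
  convert ((Equiv.inv Γ).trans (Equiv.mulLeft g)).hasSum_iff.mpr hx using 1
  ext k
  simp

lemma hasSum_single_of_convolution {W : ℓ²(Γ, H) →L[ℂ] ℓ²(Γ, H)} {c : Γ → ℂ}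
    (hc : ∀ h ζ g, W (lp.single 2 h ζ) g = c (h⁻¹ * g) • ζ) (h : Γ) (ζ : H) :
    HasSum (fun k => c k • lp.single 2 (h * k) ζ) (W (lp.single 2 h ζ)) := by
  have hy := lp.hasSum_single ENNReal.ofNat_ne_top (W (lp.single 2 h ζ))
  simp only [hc] at hy
  convert (Equiv.mulLeft h).hasSum_iff.mpr hy using 1
  ext1 k
  simp [lp.single_smul]

/-- On `lp.single 2 h ζ`, `W` is the norm-convergent sum `∑ k, c k • rightTranslation k⁻¹`,
which `X` commutes with term by term. -/
lemma commute_of_convolution {W : ℓ²(Γ, H) →L[ℂ] ℓ²(Γ, H)} {c : Γ → ℂ}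
    (hc : ∀ h ζ g, W (lp.single 2 h ζ) g = c (h⁻¹ * g) • ζ) {X : ℓ²(Γ, H) →L[ℂ] ℓ²(Γ, H)}
    (hX : ∀ g x, rightTranslation ℂ H g (X x) = X (rightTranslation ℂ H g x)) :
    W * X = X * W := by
  refine lp.ext_continuousLinearMap ENNReal.ofNat_ne_top fun h => ?_
  ext ζ g
  have hXW : HasSum (fun k => X (c k • lp.single 2 (h * k) ζ) g) (X (W (lp.single 2 h ζ)) g) :=
    ((hasSum_single_of_convolution hc h ζ).mapL X).mapL (lp.evalCLM ℂ _ 2 g)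
  refine (hasSum_apply_of_convolution hc _ g).unique (hXW.congr_fun fun k => ?_)
  have hk : lp.single 2 (h * k) ζ = rightTranslation ℂ H k⁻¹ (lp.single 2 h ζ) := by
    rw [rightTranslation_single, inv_inv]
  rw [hk, map_smul, ← hX]
  simp

theorem mem_iff_commute_rightTranslation [CompleteSpace H] (hι : ∀ S x g, ι S x g = S (x g))
    (hV : ∀ k x g, V k x g = U k (x (k⁻¹ * g))) {N : VonNeumannAlgebra ℓ²(Γ, H)}
    (hgen1 : ∀ S, ι S ∈ N) (hgen2 : ∀ k, V k ∈ N)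
    (hmin : ∀ N' : VonNeumannAlgebra ℓ²(Γ, H), (∀ S, ι S ∈ N') → (∀ k, V k ∈ N') →
      ∀ T, T ∈ N → T ∈ N')
    (X : ℓ²(Γ, H) →L[ℂ] ℓ²(Γ, H)) :
    X ∈ N ↔ ∀ g x, rightTranslation ℂ H g (X x) = X (rightTranslation ℂ H g x) := by
  rw [← mem_rightTranslationCommutant_iff]
  refine ⟨hmin _ (fun S => ?_) (fun k => ?_) X, fun hX => ?_⟩
  · refine mem_rightTranslationCommutant_iff.mpr fun g x => ?_
    ext h
    simp [hι]
  · refine mem_rightTranslationCommutant_iff.mpr fun g x => ?_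
    ext h
    simp [hV, mul_assoc]
  · rw [← SetLike.mem_coe, ← N.centralizer_centralizer, Set.mem_centralizer_iff]
    intro W hW
    rw [Set.mem_centralizer_iff] at hW
    obtain ⟨c, hc⟩ := exists_convolution_of_commute hι hV (fun S => hW _ (hgen1 S))
      (fun k => hW _ (hgen2 k))
    exact commute_of_convolution hc (mem_rightTranslationCommutant_iff.mp hX)

end Commutant

section Cutoff

variable {M : Type*} {a : Γ → M → M}

lemma tsum_enorm_cutoff_inv_rpow_two [Countable Γ] {ρ : M → ℝ}
    (hsum : ∀ m, ∑' g : Γ, ρ (a g m) ^ 2 = 1) (m : M) :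
    ∑' g : Γ, ‖(ρ (a g⁻¹ m) : ℂ)‖ₑ ^ (2 : ℝ) = 1 := by
  have hsummable : Summable fun g : Γ => ρ (a g m) ^ 2 :=
    by_contra fun h => by simpa [tsum_eq_zero_of_not_summable h] using hsum m
  have hterm : ∀ g : Γ, ‖(ρ (a g m) : ℂ)‖ₑ ^ (2 : ℝ) = ENNReal.ofReal (ρ (a g m) ^ 2) := by
    intro g
    rw [← ofReal_norm, ENNReal.ofReal_rpow_of_nonneg (norm_nonneg _) zero_le_two,
      Complex.norm_real, Real.norm_eq_abs, Real.rpow_two, sq_abs]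
  refine ((Equiv.inv Γ).tsum_eq fun g => ‖(ρ (a g m) : ℂ)‖ₑ ^ (2 : ℝ)).trans ?_
  rw [tsum_congr hterm, ← ENNReal.ofReal_tsum_of_nonneg (fun g => sq_nonneg _) hsummable, hsum m,
    ENNReal.ofReal_one]

variable [MeasurableSpace M] {μ : Measure M} {UL : Γ → Lp ℂ 2 μ ≃ₗᵢ[ℂ] Lp ℂ 2 μ} {ρ : M → ℝ}
  {lam : Lp ℂ 2 μ →L[ℂ] ℓ²(Γ, Lp ℂ 2 μ)}

lemma koopman_symm (hmp : ∀ g : Γ, MeasurePreserving (a g) μ μ)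
    (hinv : ∀ (g : Γ) (m : M), a g (a g⁻¹ m) = m)
    (hUL : ∀ (g : Γ) (η : Lp ℂ 2 μ), (UL g η : M → ℂ) =ᵐ[μ] fun m => η (a g m)) (g : Γ) :
    (UL g).symm = UL g⁻¹ := by
  ext η : 1
  rw [LinearIsometryEquiv.symm_apply_eq]
  refine Lp.ext ?_
  filter_upwards [hUL g (UL g⁻¹ η), (hmp g).quasiMeasurePreserving.ae_eq (hUL g⁻¹ η)]
    with m h₁ h₂
  have hinv' : a g⁻¹ (a g m) = m := by simpa only [inv_inv] using hinv g⁻¹ m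
  simpa only [h₁, Function.comp_apply, hinv'] using h₂.symm

lemma cutoff_koopman_apply (hmp : ∀ g : Γ, MeasurePreserving (a g) μ μ)
    (hmulact : ∀ (g h : Γ) (m : M), a (g * h) m = a h (a g m))
    (hUL : ∀ (g : Γ) (η : Lp ℂ 2 μ), (UL g η : M → ℂ) =ᵐ[μ] fun m => η (a g m))
    (hlam : ∀ (η : Lp ℂ 2 μ) (g : Γ), (lam η g : M → ℂ) =ᵐ[μ] fun m => ρ m * η (a g m))
    (g : Γ) (η : Lp ℂ 2 μ) : lam (UL g η) = rightTranslation ℂ (Lp ℂ 2 μ) g (lam η) := by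
  refine lp.ext (funext fun h => Lp.ext ?_)
  filter_upwards [hlam (UL g η) h, hlam η (h * g),
    (hmp h).quasiMeasurePreserving.ae_eq (hUL g η)] with m h₁ h₂ h₃
  simp only [rightTranslation_apply, h₁, h₂, hmulact]
  simpa only [Function.comp_apply] using congrArg _ h₃

lemma adjoint_cutoff_rightTranslation_apply (hmp : ∀ g : Γ, MeasurePreserving (a g) μ μ)
    (hinv : ∀ (g : Γ) (m : M), a g (a g⁻¹ m) = m)
    (hmulact : ∀ (g h : Γ) (m : M), a (g * h) m = a h (a g m))
    (hUL : ∀ (g : Γ) (η : Lp ℂ 2 μ), (UL g η : M → ℂ) =ᵐ[μ] fun m => η (a g m))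
    (hlam : ∀ (η : Lp ℂ 2 μ) (g : Γ), (lam η g : M → ℂ) =ᵐ[μ] fun m => ρ m * η (a g m))
    (g : Γ) (x : ℓ²(Γ, Lp ℂ 2 μ)) :
    adjoint lam (rightTranslation ℂ (Lp ℂ 2 μ) g x) = UL g (adjoint lam x) := by
  have h : lam ∘L (UL g⁻¹ : Lp ℂ 2 μ →L[ℂ] Lp ℂ 2 μ) =
      (rightTranslation ℂ (Lp ℂ 2 μ) g⁻¹ : ℓ²(Γ, Lp ℂ 2 μ) →L[ℂ] ℓ²(Γ, Lp ℂ 2 μ)) ∘L lam :=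
    ContinuousLinearMap.ext (cutoff_koopman_apply hmp hmulact hUL hlam g⁻¹)
  replace h := congr(adjoint $h)
  simp only [adjoint_comp, LinearIsometryEquiv.adjoint_eq_symm, koopman_symm hmp hinv hUL,
    rightTranslation_symm, inv_inv] at h
  exact congr($h.symm x)

lemma norm_cutoff_apply [Countable Γ] (hmp : ∀ g : Γ, MeasurePreserving (a g) μ μ)
    (hinv : ∀ (g : Γ) (m : M), a g (a g⁻¹ m) = m) (hsum : ∀ m, ∑' g : Γ, ρ (a g m) ^ 2 = 1)
    (hlam : ∀ (η : Lp ℂ 2 μ) (g : Γ), (lam η g : M → ℂ) =ᵐ[μ] fun m => ρ m * η (a g m))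
    (η : Lp ℂ 2 μ) : ‖lam η‖ = ‖η‖ := by
  have hmeas : ∀ g : Γ, Measurable fun m => ‖(lam η g : M → ℂ) m‖ₑ ^ (2 : ℝ) := fun g =>
    (Lp.stronglyMeasurable _).measurable.enorm.pow_const _
  have hae : ∀ᵐ m ∂μ, ∀ g : Γ, (lam η g : M → ℂ) (a g⁻¹ m) = ρ (a g⁻¹ m) * η m := by
    refine ae_all_iff.mpr fun g => ?_
    filter_upwards [(hmp g⁻¹).quasiMeasurePreserving.ae_eq (hlam η g)] with m hm
    simpa only [Function.comp_apply, hinv] using hm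
  rw [← enorm_eq_iff_norm_eq, ← (ENNReal.rpow_left_injective two_ne_zero).eq_iff,
    lp.enorm_rpow_two_eq_tsum, Lp.enorm_rpow_two_eq_lintegral]
  calc ∑' g, ‖lam η g‖ₑ ^ (2 : ℝ)
      = ∑' g, ∫⁻ m, ‖(lam η g : M → ℂ) (a g⁻¹ m)‖ₑ ^ (2 : ℝ) ∂μ := by
        refine tsum_congr fun g => ?_
        rw [Lp.enorm_rpow_two_eq_lintegral, (hmp g⁻¹).lintegral_comp (hmeas g)]
    _ = ∫⁻ m, ∑' g, ‖(lam η g : M → ℂ) (a g⁻¹ m)‖ₑ ^ (2 : ℝ) ∂μ :=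
        (lintegral_tsum fun g => ((hmeas g).comp (hmp g⁻¹).measurable).aemeasurable).symm
    _ = ∫⁻ m, ‖η m‖ₑ ^ (2 : ℝ) ∂μ := by
        refine lintegral_congr_ae ?_
        filter_upwards [hae] with m hm
        simp only [hm, enorm_mul, ENNReal.mul_rpow_of_nonneg _ _ zero_le_two,
          ENNReal.tsum_mul_right, tsum_enorm_cutoff_inv_rpow_two hsum, one_mul]

lemma adjoint_cutoff_apply_cutoff [Countable Γ] (hmp : ∀ g : Γ, MeasurePreserving (a g) μ μ)
    (hinv : ∀ (g : Γ) (m : M), a g (a g⁻¹ m) = m) (hsum : ∀ m, ∑' g : Γ, ρ (a g m) ^ 2 = 1)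
    (hlam : ∀ (η : Lp ℂ 2 μ) (g : Γ), (lam η g : M → ℂ) =ᵐ[μ] fun m => ρ m * η (a g m))
    (η : Lp ℂ 2 μ) : adjoint lam (lam η) = η :=
  congr($((norm_map_iff_adjoint_comp_self lam).mp (norm_cutoff_apply hmp hinv hsum hlam)) η)

end Cutoff

end CrossedProduct

theorem Lambda_star_monomorphism_onto_corner_general {Γ : Type*} [Group Γ] [Countable Γ]
    {M : Type*} [MeasurableSpace M] (μ : Measure M)
    (a : Γ → M → M)
    (hmp : ∀ g : Γ, MeasurePreserving (a g) μ μ)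
    (hone : ∀ m, a 1 m = m)
    (hmulact : ∀ (g h : Γ) (m : M), a (g * h) m = a h (a g m))
    (ρ : M → ℝ)
    (hsum : ∀ m, ∑' g : Γ, (ρ (a g m)) ^ 2 = 1)
    -- the unitaries on L²(M̂) induced by the action
    (UL : Γ → (Lp ℂ 2 μ ≃ₗᵢ[ℂ] Lp ℂ 2 μ))
    (hUL : ∀ (g : Γ) (η : Lp ℂ 2 μ),
      ((UL g η : Lp ℂ 2 μ) : M → ℂ) =ᵐ[μ] fun m => (η : M → ℂ) (a g m))
    -- the maps λ and λ̂
    (lam : Lp ℂ 2 μ →L[ℂ] lp (fun _ : Γ => Lp ℂ 2 μ) 2)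
    (hlam : ∀ (η : Lp ℂ 2 μ) (g : Γ),
      (((lam η : lp (fun _ : Γ => Lp ℂ 2 μ) 2) : ∀ _ : Γ, Lp ℂ 2 μ) g : M → ℂ)
        =ᵐ[μ] fun m => (ρ m : ℂ) * (η : M → ℂ) (a g m))
    (hat : lp (fun _ : Γ => Lp ℂ 2 μ) 2 →L[ℂ] Lp ℂ 2 μ)
    (hhat : hat = ContinuousLinearMap.adjoint lam)
    -- the crossed product von Neumann algebra 𝒩 with its canonical generators
    (ι : (Lp ℂ 2 μ →L[ℂ] Lp ℂ 2 μ) →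
      (lp (fun _ : Γ => Lp ℂ 2 μ) 2 →L[ℂ] lp (fun _ : Γ => Lp ℂ 2 μ) 2))
    (hι : ∀ (S : Lp ℂ 2 μ →L[ℂ] Lp ℂ 2 μ) (x : lp (fun _ : Γ => Lp ℂ 2 μ) 2) (g : Γ),
      (ι S x : ∀ _ : Γ, Lp ℂ 2 μ) g = S ((x : ∀ _ : Γ, Lp ℂ 2 μ) g))
    (V : Γ → (lp (fun _ : Γ => Lp ℂ 2 μ) 2 →L[ℂ] lp (fun _ : Γ => Lp ℂ 2 μ) 2))
    (hV : ∀ (k : Γ) (x : lp (fun _ : Γ => Lp ℂ 2 μ) 2) (g : Γ),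
      (V k x : ∀ _ : Γ, Lp ℂ 2 μ) g = UL k ((x : ∀ _ : Γ, Lp ℂ 2 μ) (k⁻¹ * g)))
    (N : VonNeumannAlgebra (lp (fun _ : Γ => Lp ℂ 2 μ) 2))
    (hgen1 : ∀ S : Lp ℂ 2 μ →L[ℂ] Lp ℂ 2 μ, ι S ∈ N) (hgen2 : ∀ k : Γ, V k ∈ N)
    (hmin : ∀ N' : VonNeumannAlgebra (lp (fun _ : Γ => Lp ℂ 2 μ) 2),
      (∀ S : Lp ℂ 2 μ →L[ℂ] Lp ℂ 2 μ, ι S ∈ N') → (∀ k : Γ, V k ∈ N') →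
      ∀ T, T ∈ N → T ∈ N') :
    -- ℳ is the algebra of Γ-invariant operators:
    (∀ T S : Lp ℂ 2 μ →L[ℂ] Lp ℂ 2 μ,
        (∀ (g : Γ) (η : Lp ℂ 2 μ), T (UL g η) = UL g (T η)) →
        (∀ (g : Γ) (η : Lp ℂ 2 μ), S (UL g η) = UL g (S η)) →
        lam ∘L (T ∘L S) ∘L hat = (lam ∘L T ∘L hat) ∘L (lam ∘L S ∘L hat)) ∧
    (∀ T : Lp ℂ 2 μ →L[ℂ] Lp ℂ 2 μ,
        (∀ (g : Γ) (η : Lp ℂ 2 μ), T (UL g η) = UL g (T η)) →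
        lam ∘L (ContinuousLinearMap.adjoint T) ∘L hat =
          ContinuousLinearMap.adjoint (lam ∘L T ∘L hat)) ∧
    (∀ T T' : Lp ℂ 2 μ →L[ℂ] Lp ℂ 2 μ,
        (∀ (g : Γ) (η : Lp ℂ 2 μ), T (UL g η) = UL g (T η)) →
        (∀ (g : Γ) (η : Lp ℂ 2 μ), T' (UL g η) = UL g (T' η)) →
        lam ∘L T ∘L hat = lam ∘L T' ∘L hat → T = T') ∧
    ((fun T => lam ∘L T ∘L hat) ''
        {T | ∀ (g : Γ) (η : Lp ℂ 2 μ), T (UL g η) = UL g (T η)} =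
      (fun S => (lam ∘L hat) ∘L S ∘L (lam ∘L hat)) '' {S | S ∈ N}) := by
  classical
  subst hhat
  have hinv : ∀ (g : Γ) (m : M), a g (a g⁻¹ m) = m := fun g m => by
    rw [← hmulact, inv_mul_cancel, hone]
  have hatlam := CrossedProduct.adjoint_cutoff_apply_cutoff hmp hinv hsum hlam
  have hlamU := CrossedProduct.cutoff_koopman_apply hmp hmulact hUL hlam
  have hhatR := CrossedProduct.adjoint_cutoff_rightTranslation_apply hmp hinv hmulact hUL hlam
  have hN := CrossedProduct.mem_iff_commute_rightTranslation hι hV hgen1 hgen2 hmin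
  refine ⟨fun T S _ _ => ?_, fun T _ => ?_, fun T T' _ _ h => ?_, ?_⟩
  · ext1 η
    simp [hatlam]
  · rw [adjoint_comp, adjoint_comp, adjoint_adjoint, comp_assoc]
  · ext1 η
    simpa [hatlam] using congr(adjoint lam ($h (lam η)))
  · ext D
    constructor
    · rintro ⟨T, hT, rfl⟩
      refine ⟨lam ∘L T ∘L adjoint lam, (hN _).mpr fun g x => ?_, by ext1; simp [hatlam]⟩
      simp only [comp_apply, hhatR, hT g, hlamU]
    · rintro ⟨S, hS, rfl⟩
      refine ⟨adjoint lam ∘L S ∘L lam, fun g η => ?_, rfl⟩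
      simp only [comp_apply, hlamU, ← (hN S).mp hS, hhatR]

/-- With `λ, λ̂` as in the cutoff construction for a free proper action,
the map `Λ(T) = λ ∘ T ∘ λ̂` is an injective *-homomorphism from the von Neumann algebra
`ℳ` of `Γ`-invariant bounded operators on `L²(M̂)` onto the corner `(λλ̂)𝒩(λλ̂)` of the
crossed product von Neumann algebra `𝒩`: it preserves products and adjoints, is injective,
and its image is the compression of `𝒩` by the projection `λλ̂`. -/
theorem Lambda_star_monomorphism_onto_corner {Γ : Type*} [Group Γ] [Countable Γ]
    {M : Type*} [MeasurableSpace M] (μ : Measure M)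
    (a : Γ → M → M)
    (hmp : ∀ g : Γ, MeasurePreserving (a g) μ μ)
    (hone : ∀ m, a 1 m = m)
    (hmulact : ∀ (g h : Γ) (m : M), a (g * h) m = a h (a g m))
    (hfree : ∀ g : Γ, g ≠ 1 → ∀ m, a g m ≠ m)
    (ρ : M → ℝ) (hρ : ∀ m, ρ m ∈ Set.Icc (0 : ℝ) 1)
    (hsum : ∀ m, ∑' g : Γ, (ρ (a g m)) ^ 2 = 1)
    -- the unitaries on L²(M̂) induced by the action
    (UL : Γ → (Lp ℂ 2 μ ≃ₗᵢ[ℂ] Lp ℂ 2 μ))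
    (hUL : ∀ (g : Γ) (η : Lp ℂ 2 μ),
      ((UL g η : Lp ℂ 2 μ) : M → ℂ) =ᵐ[μ] fun m => (η : M → ℂ) (a g m))
    -- the maps λ and λ̂
    (lam : Lp ℂ 2 μ →L[ℂ] lp (fun _ : Γ => Lp ℂ 2 μ) 2)
    (hlam : ∀ (η : Lp ℂ 2 μ) (g : Γ),
      (((lam η : lp (fun _ : Γ => Lp ℂ 2 μ) 2) : ∀ _ : Γ, Lp ℂ 2 μ) g : M → ℂ)
        =ᵐ[μ] fun m => (ρ m : ℂ) * (η : M → ℂ) (a g m))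
    (hat : lp (fun _ : Γ => Lp ℂ 2 μ) 2 →L[ℂ] Lp ℂ 2 μ)
    (hhat : hat = ContinuousLinearMap.adjoint lam)
    -- the crossed product von Neumann algebra 𝒩 with its canonical generators
    (ι : (Lp ℂ 2 μ →L[ℂ] Lp ℂ 2 μ) →
      (lp (fun _ : Γ => Lp ℂ 2 μ) 2 →L[ℂ] lp (fun _ : Γ => Lp ℂ 2 μ) 2))
    (hι : ∀ (S : Lp ℂ 2 μ →L[ℂ] Lp ℂ 2 μ) (x : lp (fun _ : Γ => Lp ℂ 2 μ) 2) (g : Γ),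
      (ι S x : ∀ _ : Γ, Lp ℂ 2 μ) g = S ((x : ∀ _ : Γ, Lp ℂ 2 μ) g))
    (V : Γ → (lp (fun _ : Γ => Lp ℂ 2 μ) 2 →L[ℂ] lp (fun _ : Γ => Lp ℂ 2 μ) 2))
    (hV : ∀ (k : Γ) (x : lp (fun _ : Γ => Lp ℂ 2 μ) 2) (g : Γ),
      (V k x : ∀ _ : Γ, Lp ℂ 2 μ) g = UL k ((x : ∀ _ : Γ, Lp ℂ 2 μ) (k⁻¹ * g)))
    (N : VonNeumannAlgebra (lp (fun _ : Γ => Lp ℂ 2 μ) 2))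
    (hgen1 : ∀ S : Lp ℂ 2 μ →L[ℂ] Lp ℂ 2 μ, ι S ∈ N) (hgen2 : ∀ k : Γ, V k ∈ N)
    (hmin : ∀ N' : VonNeumannAlgebra (lp (fun _ : Γ => Lp ℂ 2 μ) 2),
      (∀ S : Lp ℂ 2 μ →L[ℂ] Lp ℂ 2 μ, ι S ∈ N') → (∀ k : Γ, V k ∈ N') →
      ∀ T, T ∈ N → T ∈ N') :
    -- ℳ is the algebra of Γ-invariant operators:
    (∀ T S : Lp ℂ 2 μ →L[ℂ] Lp ℂ 2 μ,
        (∀ (g : Γ) (η : Lp ℂ 2 μ), T (UL g η) = UL g (T η)) →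
        (∀ (g : Γ) (η : Lp ℂ 2 μ), S (UL g η) = UL g (S η)) →
        lam ∘L (T ∘L S) ∘L hat = (lam ∘L T ∘L hat) ∘L (lam ∘L S ∘L hat)) ∧
    (∀ T : Lp ℂ 2 μ →L[ℂ] Lp ℂ 2 μ,
        (∀ (g : Γ) (η : Lp ℂ 2 μ), T (UL g η) = UL g (T η)) →
        lam ∘L (ContinuousLinearMap.adjoint T) ∘L hat =
          ContinuousLinearMap.adjoint (lam ∘L T ∘L hat)) ∧
    (∀ T T' : Lp ℂ 2 μ →L[ℂ] Lp ℂ 2 μ,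
        (∀ (g : Γ) (η : Lp ℂ 2 μ), T (UL g η) = UL g (T η)) →
        (∀ (g : Γ) (η : Lp ℂ 2 μ), T' (UL g η) = UL g (T' η)) →
        lam ∘L T ∘L hat = lam ∘L T' ∘L hat → T = T') ∧
    ((fun T => lam ∘L T ∘L hat) ''
        {T | ∀ (g : Γ) (η : Lp ℂ 2 μ), T (UL g η) = UL g (T η)} =
      (fun S => (lam ∘L hat) ∘L S ∘L (lam ∘L hat)) '' {S | S ∈ N}) :=
  Lambda_star_monomorphism_onto_corner_general μ a hmp hone hmulact ρ hsum UL hUL lam hlam hat hhat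
    ι hι V hV N hgen1 hgen2 hmin
end
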